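/- arXiv:1503.03357 — 2 statements merged into one kernel-verified Lean document; each statement's English description precedes it below -/
import Mathlib

section
/- Fix an integer r ≥ 1 and c ∈ [0,1]. Then there exists a constant K such that for all n, |Σ_{i odd, 0 ≤ i ≤ r} C(⌊cn⌋, r−i)·C(n−⌊cn⌋, i) − n^r/(2r!)·(1−(2c−1)^r)| ≤ K·n^(r−1). -/
/-!
Put `m = ⌊c n⌋` and `p = n - m`. Replacing each binomial coefficient `C(a, k)` by `a ^ k / k!`
costs `O(n ^ (r - 1))`, and the odd-index half of the binomial expansion of `(m + p) ^ r` is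
`((m + p) ^ r - (m - p) ^ r) / 2`. Finally `m + p = n` and `m - p = (2c - 1) n + O(1)`, so
`(m - p) ^ r = ((2c - 1) n) ^ r + O(n ^ (r - 1))`.
-/

open Finset Nat

lemma abs_pow_sub_pow_le_of_abs_le {a b M : ℝ} (ha : |a| ≤ M) (hb : |b| ≤ M) (n : ℕ) :
    |a ^ n - b ^ n| ≤ |a - b| * n * M ^ (n - 1) :=
  (abs_pow_sub_pow_le a b n).trans <| by
    have := (abs_nonneg a).trans ha
    gcongr
    exact max_le ha hb

/-- `(a - k) ^ k ≤ a.descFactorial k ≤ a ^ k`, and the two powers differ by at most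
`k ^ 2 * a ^ (k - 1)`. -/
lemma abs_descFactorial_sub_pow_le (a k : ℕ) :
    |(a.descFactorial k : ℝ) - (a : ℝ) ^ k| ≤ (k : ℝ) ^ 2 * (a : ℝ) ^ (k - 1) := by
  set b : ℕ := a - k
  have hlow : (b : ℝ) ^ k ≤ a.descFactorial k := by
    exact_mod_cast (Nat.pow_le_pow_left (by omega) k).trans (Nat.pow_sub_le_descFactorial a k)
  have hup : (a.descFactorial k : ℝ) ≤ (a : ℝ) ^ k := by
    exact_mod_cast Nat.descFactorial_le_pow a k
  have hba : (b : ℝ) ≤ a := by exact_mod_cast Nat.sub_le a k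
  have hgap : (a : ℝ) ≤ b + k := by exact_mod_cast (show a ≤ b + k by omega)
  have hb0 : (0 : ℝ) ≤ b := b.cast_nonneg
  calc |(a.descFactorial k : ℝ) - (a : ℝ) ^ k| ≤ |(a : ℝ) ^ k - (b : ℝ) ^ k| := by
        rw [abs_sub_comm, abs_of_nonneg (by linarith), abs_of_nonneg (by linarith)]
        linarith
    _ ≤ |(a : ℝ) - b| * k * (a : ℝ) ^ (k - 1) :=
        abs_pow_sub_pow_le_of_abs_le (by rw [abs_of_nonneg (by linarith)])
          (by rwa [abs_of_nonneg hb0]) k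
    _ ≤ k * k * (a : ℝ) ^ (k - 1) := by
        rw [abs_of_nonneg (by linarith)]
        gcongr
        linarith
    _ = (k : ℝ) ^ 2 * (a : ℝ) ^ (k - 1) := by ring

lemma abs_choose_sub_pow_div_factorial_le (a k : ℕ) :
    |(a.choose k : ℝ) - (a : ℝ) ^ k / k !| ≤ (k : ℝ) ^ 2 * (a : ℝ) ^ (k - 1) := by
  have hfact : (1 : ℝ) ≤ k ! := by exact_mod_cast k.factorial_pos
  have hdesc : (a.descFactorial k : ℝ) = k ! * a.choose k := by
    exact_mod_cast Nat.descFactorial_eq_factorial_mul_choose a k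
  have hquot : (a.choose k : ℝ) - (a : ℝ) ^ k / k ! = ((a.descFactorial k : ℝ) - a ^ k) / k ! := by
    rw [hdesc]
    field_simp
  rw [hquot, abs_div, abs_of_pos (by positivity : (0 : ℝ) < k !)]
  exact (div_le_self (abs_nonneg _) hfact).trans (abs_descFactorial_sub_pow_le a k)

lemma sq_mul_pow_pred_mul_pow_le {a b n : ℝ} (ha : 0 ≤ a) (hb : 0 ≤ b) (han : a ≤ n)
    (hbn : b ≤ n) (j i : ℕ) :
    (j : ℝ) ^ 2 * a ^ (j - 1) * b ^ i ≤ (j : ℝ) ^ 2 * n ^ (j + i - 1) := by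
  rcases Nat.eq_zero_or_pos j with rfl | hj
  · simp
  have := ha.trans han
  rw [mul_assoc, show j + i - 1 = (j - 1) + i by omega, pow_add]
  gcongr

lemma abs_choose_mul_choose_sub_le (m p j i : ℕ) :
    |(m.choose j : ℝ) * p.choose i - (m : ℝ) ^ j * (p : ℝ) ^ i / (j ! * i !)|
      ≤ ((j : ℝ) ^ 2 + (i : ℝ) ^ 2) * ((m + p : ℕ) : ℝ) ^ (j + i - 1) := by
  have hm : (m : ℝ) ≤ (m + p : ℕ) := by exact_mod_cast m.le_add_right p
  have hp : (p : ℝ) ≤ (m + p : ℕ) := by exact_mod_cast p.le_add_left m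
  have hsplit : (m.choose j : ℝ) * p.choose i - (m : ℝ) ^ j * (p : ℝ) ^ i / (j ! * i !)
      = ((m.choose j : ℝ) - (m : ℝ) ^ j / j !) * p.choose i
        + (m : ℝ) ^ j / j ! * ((p.choose i : ℝ) - (p : ℝ) ^ i / i !) := by
    field_simp
    ring
  have hchoose : (p.choose i : ℝ) ≤ (p : ℝ) ^ i := by exact_mod_cast p.choose_le_pow i
  have hpow : (m : ℝ) ^ j / j ! ≤ (m : ℝ) ^ j :=
    div_le_self (by positivity) (by exact_mod_cast j.factorial_pos)
  rw [hsplit]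
  calc _ ≤ (j : ℝ) ^ 2 * (m : ℝ) ^ (j - 1) * (p : ℝ) ^ i
          + (i : ℝ) ^ 2 * (p : ℝ) ^ (i - 1) * (m : ℝ) ^ j := by
        refine (abs_add_le _ _).trans (add_le_add ?_ ?_) <;> rw [abs_mul]
        · rw [abs_of_nonneg (by positivity : (0 : ℝ) ≤ p.choose i)]
          gcongr
          exact abs_choose_sub_pow_div_factorial_le m j
        · rw [abs_of_nonneg (by positivity : (0 : ℝ) ≤ (m : ℝ) ^ j / j !), mul_comm]
          gcongr
          exact abs_choose_sub_pow_div_factorial_le p i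
    _ ≤ (j : ℝ) ^ 2 * ((m + p : ℕ) : ℝ) ^ (j + i - 1)
          + (i : ℝ) ^ 2 * ((m + p : ℕ) : ℝ) ^ (i + j - 1) := by
        have hm0 : (0 : ℝ) ≤ m := m.cast_nonneg
        have hp0 : (0 : ℝ) ≤ p := p.cast_nonneg
        exact add_le_add (sq_mul_pow_pred_mul_pow_le hm0 hp0 hm hp j i)
          (sq_mul_pow_pred_mul_pow_le hp0 hm0 hp hm i j)
    _ = _ := by rw [add_comm i j]; ring

lemma sum_odd_pow_mul_pow_div_factorial {K : Type*} [Field K] [CharZero K] (x y : K) (r : ℕ) :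
    ∑ i ∈ range (r + 1), (if Odd i then x ^ (r - i) * y ^ i / ((r - i)! * i !) else 0)
      = ((x + y) ^ r - (x - y) ^ r) / (2 * r !) := by
  rw [eq_div_iff (mul_ne_zero two_ne_zero (Nat.cast_ne_zero.2 r.factorial_ne_zero)), add_comm x,
    sub_eq_neg_add x y, add_pow, add_pow,
    ← sum_sub_distrib, sum_mul]
  refine sum_congr rfl fun i hi => ?_
  rw [Nat.cast_choose K (by simpa [Nat.lt_succ_iff] using hi)]
  rcases Nat.even_or_odd i with heven | hodd
  · simp [heven.neg_pow, Nat.not_odd_iff_even.2 heven]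
  · rw [if_pos hodd, hodd.neg_pow]
    field_simp
    ring

lemma abs_sum_odd_choose_mul_choose_sub_le (m p r : ℕ) :
    |(∑ i ∈ range (r + 1), if Odd i then (m.choose (r - i) : ℝ) * p.choose i else 0)
        - (((m + p : ℕ) : ℝ) ^ r - ((m : ℝ) - p) ^ r) / (2 * r !)|
      ≤ 2 * (r + 1) * (r : ℝ) ^ 2 * ((m + p : ℕ) : ℝ) ^ (r - 1) := by
  rw [Nat.cast_add, ← sum_odd_pow_mul_pow_div_factorial, ← sum_sub_distrib, ← Nat.cast_add]
  refine (abs_sum_le_sum_abs _ _).trans ?_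
  calc _ ≤ ∑ _i ∈ range (r + 1), 2 * (r : ℝ) ^ 2 * ((m + p : ℕ) : ℝ) ^ (r - 1) := by
        refine sum_le_sum fun i hi => ?_
        have hir : i ≤ r := Nat.lt_succ_iff.1 (mem_range.1 hi)
        split_ifs
        · refine (abs_choose_mul_choose_sub_le m p (r - i) i).trans ?_
          rw [Nat.sub_add_cancel hir]
          have : ((r - i : ℕ) : ℝ) ≤ r := by exact_mod_cast r.sub_le i
          have : (i : ℝ) ≤ r := by exact_mod_cast hir
          gcongr
          nlinarith
        · simp only [sub_self, abs_zero]
          positivity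
    _ = _ := by
        rw [sum_const, card_range, nsmul_eq_mul]
        push_cast
        ring

lemma abs_sub_pow_div_factorial_le {n d t : ℝ} (hd : |d| ≤ n) (ht : |t| ≤ 1)
    (hdt : |d - t * n| ≤ 2) (r : ℕ) :
    |(n ^ r - d ^ r) / (2 * r !) - n ^ r / (2 * r !) * (1 - t ^ r)| ≤ r * n ^ (r - 1) := by
  have hn : 0 ≤ n := (abs_nonneg d).trans hd
  have htn : |t * n| ≤ n := by
    rw [abs_mul, abs_of_nonneg hn]
    exact mul_le_of_le_one_left hn ht
  have hpow : |(t * n) ^ r - d ^ r| ≤ 2 * r * n ^ (r - 1) := by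
    refine (abs_pow_sub_pow_le_of_abs_le htn hd r).trans ?_
    rw [abs_sub_comm]
    gcongr
  have hdiff : (n ^ r - d ^ r) / (2 * r !) - n ^ r / (2 * r !) * (1 - t ^ r)
      = ((t * n) ^ r - d ^ r) / (2 * r !) := by
    rw [mul_pow]
    field_simp
    ring
  have hfact : (1 : ℝ) ≤ r ! := by exact_mod_cast r.factorial_pos
  have : 0 ≤ r * n ^ (r - 1) := by positivity
  rw [hdiff, abs_div, abs_of_pos (by positivity : (0 : ℝ) < 2 * r !), div_le_iff₀ (by positivity)]
  nlinarith

theorem stmt_3_general (r : ℕ) (c : ℝ) (hc0 : 0 ≤ c) (hc1 : c ≤ 1) :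
    ∃ K : ℝ, ∀ n : ℕ,
      |(∑ i ∈ Finset.range (r + 1), if Odd i then
          ((Nat.choose ⌊c * n⌋₊ (r - i) : ℝ) * (Nat.choose (n - ⌊c * n⌋₊) i : ℝ)) else 0)
        - (n : ℝ) ^ r / (2 * (Nat.factorial r : ℝ)) * (1 - (2 * c - 1) ^ r)|
      ≤ K * (n : ℝ) ^ (r - 1) := by
  refine ⟨2 * (r + 1) * r ^ 2 + r, fun n => ?_⟩
  set m := ⌊c * n⌋₊
  set p := n - m
  have hcn : 0 ≤ c * n := by positivity
  have hmn : m ≤ n := Nat.floor_le_of_le (by nlinarith)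
  have hp : (p : ℝ) = n - m := Nat.cast_sub hmn
  have hsum := abs_sum_odd_choose_mul_choose_sub_le m p r
  rw [show ((m + p : ℕ) : ℝ) = n by rw [Nat.add_sub_cancel' hmn]] at hsum
  have hmain := abs_sub_pow_div_factorial_le (n := n) (d := m - p) (t := 2 * c - 1) ?_ ?_ ?_ r
  · calc _ ≤ _ := abs_sub_le _ (((n : ℝ) ^ r - ((m : ℝ) - p) ^ r) / (2 * r !)) _
      _ ≤ _ := add_le_add hsum hmain
      _ = _ := by ring
  · rw [abs_le, hp]
    constructor <;> linarith [m.cast_nonneg (α := ℝ)]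
  · exact abs_le.2 ⟨by linarith, by linarith⟩
  · have := Nat.floor_le hcn
    have := Nat.lt_floor_add_one (c * n)
    rw [abs_le, hp]
    constructor <;> linarith

theorem stmt_3 (r : ℕ) (hr : 1 ≤ r) (c : ℝ) (hc0 : 0 ≤ c) (hc1 : c ≤ 1) :
    ∃ K : ℝ, ∀ n : ℕ,
      |(∑ i ∈ Finset.range (r + 1), if Odd i then
          ((Nat.choose ⌊c * n⌋₊ (r - i) : ℝ) * (Nat.choose (n - ⌊c * n⌋₊) i : ℝ)) else 0)
        - (n : ℝ) ^ r / (2 * (Nat.factorial r : ℝ)) * (1 - (2 * c - 1) ^ r)|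
      ≤ K * (n : ℝ) ^ (r - 1) :=
  stmt_3_general r c hc0 hc1
end

section
/- Let H be a k-uniform hypergraph on n vertices with at least γ·n^k/k edges and suppose x, y ∈ V(H) satisfy |N_H(x) ∩ N_H(y)| ≥ γ·n^(k−1). Then, for n sufficiently large and 0 < γ' ≪ γ ≪ 1/k, there are at least γ'·n^(2k−1) sets X ⊆ V(H) of size 2k−1 such that both H[X ∪ {x}] and H[X ∪ {y}] contain perfect matchings. -/
/-!
Take a common link set `S` of `x` and `y` and an edge `e` avoiding `S ∪ {x, y}`. Then
`X = S ∪ e` has size `2k - 1`, and `{S ∪ {x}, e}`, `{S ∪ {y}, e}` are perfect matchings of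
`X ∪ {x}` and `X ∪ {y}`. Every vertex lies in at most `n^(k-1)` edges, so for `n ≫ k²/γ` all
but `γ n^k / (2k)` edges avoid the `k + 1` vertices of `S ∪ {x, y}`: this gives
`γ n^(k-1) · γ n^k / (2k)` pairs `(S, e)`. A set `X` determines `e = X \ S`, so it comes from at
most `2^(2k-1)` pairs.
-/

open scoped Classical

/-- The link of vertex `v` in the hypergraph with edge set `E`: the family of
`(k-1)`-sets forming an edge together with `v`. -/
def link {V : Type*} [Fintype V] [DecidableEq V] (E : Finset (Finset V)) (k : ℕ) (v : V) :
    Finset (Finset V) :=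
  (Finset.univ : Finset (Finset V)).filter
    (fun S => S.card = k - 1 ∧ v ∉ S ∧ insert v S ∈ E)

/-- `M` is a perfect matching of the subhypergraph of the hypergraph with edge
set `E` induced on `W`. -/
def IsPMOn {V : Type*} [DecidableEq V] (E : Finset (Finset V)) (W : Finset V)
    (M : Finset (Finset V)) : Prop :=
  (∀ e ∈ M, e ∈ E ∧ e ⊆ W) ∧ (∀ e ∈ M, ∀ f ∈ M, e ≠ f → Disjoint e f) ∧
    (∀ v ∈ W, ∃ e ∈ M, v ∈ e)

open Finset

section Counting

variable {V : Type*} [DecidableEq V]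

theorem isPMOn_pair {E : Finset (Finset V)} {a b : Finset V} (ha : a ∈ E) (hb : b ∈ E)
    (hab : Disjoint a b) : IsPMOn E (a ∪ b) {a, b} := by
  refine ⟨?_, ?_, ?_⟩
  · simp only [mem_insert, mem_singleton]
    rintro e (rfl | rfl)
    exacts [⟨ha, subset_union_left⟩, ⟨hb, subset_union_right⟩]
  · simp only [mem_insert, mem_singleton]
    rintro e (rfl | rfl) f (rfl | rfl) hef <;>
      first | exact absurd rfl hef | exact hab | exact hab.symm
  · intro v hv
    rcases mem_union.1 hv with h | h
    exacts [⟨a, by simp, h⟩, ⟨b, by simp, h⟩]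

/-- A set `X` is the union `p.1 ∪ p.2` of at most `2 ^ #X` disjoint pairs, one for each
choice of `p.1 ⊆ X`. -/
theorem card_le_two_pow_mul_card_of_disjoint_union {P : Finset (Σ _ : Finset V, Finset V)}
    {T : Finset (Finset V)} {m : ℕ} (hdisj : ∀ p ∈ P, Disjoint p.1 p.2)
    (hT : ∀ p ∈ P, p.1 ∪ p.2 ∈ T) (hm : ∀ X ∈ T, X.card = m) :
    P.card ≤ 2 ^ m * T.card := by
  refine card_le_mul_card_image_of_maps_to hT _ fun X hX => ?_
  calc #(P.filter fun p => p.1 ∪ p.2 = X) ≤ #X.powerset := by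
        refine card_le_card_of_injOn (fun p => p.1) (fun p hp => ?_)
          fun p hp q hq (hpq : p.1 = q.1) => ?_
        · rw [mem_coe, mem_filter] at hp
          rw [mem_coe, mem_powerset, ← hp.2]
          exact subset_union_left
        · rw [mem_coe, mem_filter] at hp hq
          have hsnd : p.2 = q.2 := by
            rw [← union_sdiff_cancel_left (hdisj p hp.1),
              ← union_sdiff_cancel_left (hdisj q hq.1), hp.2, hq.2, hpq]
          exact Sigma.ext hpq (heq_of_eq hsnd)
    _ = 2 ^ m := by rw [card_powerset, hm X hX]

variable [Fintype V] {E : Finset (Finset V)} {k : ℕ}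

theorem mem_link {v : V} {S : Finset V} :
    S ∈ link E k v ↔ S.card = k - 1 ∧ v ∉ S ∧ insert v S ∈ E := by
  simp [link]

theorem card_filter_mem_le_card_pow (hE : ∀ e ∈ E, e.card = k) (v : V) :
    #(E.filter (v ∈ ·)) ≤ Fintype.card V ^ (k - 1) := by
  calc #(E.filter (v ∈ ·)) ≤ #((univ : Finset V).powersetCard (k - 1)) := by
        refine card_le_card_of_injOn (fun e => e.erase v) (fun e he => ?_) fun e he f hf hef => ?_
        · rw [mem_coe, mem_filter] at he
          rw [mem_coe, mem_powersetCard, card_erase_of_mem he.2, hE e he.1]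
          exact ⟨subset_univ _, rfl⟩
        · rw [mem_coe, mem_filter] at he hf
          rw [← insert_erase he.2, ← insert_erase hf.2]
          exact congrArg (insert v) hef
    _ = (Fintype.card V).choose (k - 1) := by rw [card_powersetCard, card_univ]
    _ ≤ Fintype.card V ^ (k - 1) := Nat.choose_le_pow _ _

theorem card_filter_not_disjoint_le (hE : ∀ e ∈ E, e.card = k) (A : Finset V) :
    #(E.filter fun e => ¬Disjoint e A) ≤ A.card * Fintype.card V ^ (k - 1) := by
  have hcover : E.filter (fun e => ¬Disjoint e A) ⊆ A.biUnion fun v => E.filter (v ∈ ·) := by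
    intro e he
    obtain ⟨he, hmeet⟩ := mem_filter.1 he
    obtain ⟨v, hve, hvA⟩ := not_disjoint_iff.1 hmeet
    exact mem_biUnion.2 ⟨v, hvA, mem_filter.2 ⟨he, hve⟩⟩
  exact (card_le_card hcover).trans
    (card_biUnion_le_card_mul _ _ _ fun v _ => card_filter_mem_le_card_pow hE v)

/-- The sets witnessing that `x` and `y` are reachable from each other. -/
noncomputable def reachingSets (E : Finset (Finset V)) (k : ℕ) (x y : V) : Finset (Finset V) :=
  univ.filter fun X => X.card = 2 * k - 1 ∧
    (∃ M, IsPMOn E (insert x X) M) ∧ (∃ M, IsPMOn E (insert y X) M)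

theorem union_mem_reachingSets (hE : ∀ e ∈ E, e.card = k) {x y : V} {S e : Finset V}
    (hS : S ∈ link E k x ∩ link E k y) (he : e ∈ E)
    (hdisj : Disjoint e (insert x (insert y S))) :
    S ∪ e ∈ reachingSets E k x y := by
  obtain ⟨⟨hScard, hxS, hxE⟩, -, hyS, hyE⟩ := And.imp mem_link.1 mem_link.1 (mem_inter.1 hS)
  have hxdisj : Disjoint (insert x S) e :=
    (hdisj.mono_right (insert_subset_insert x (subset_insert y S))).symm
  have hydisj : Disjoint (insert y S) e := (hdisj.mono_right (subset_insert x _)).symm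
  have hk : 1 ≤ k := by rw [← hE _ hxE, card_insert_of_notMem hxS]; omega
  refine mem_filter.2 ⟨mem_univ _, ?_, ⟨{insert x S, e}, ?_⟩, ⟨{insert y S, e}, ?_⟩⟩
  · rw [card_union_of_disjoint (disjoint_of_subset_left (subset_insert x S) hxdisj), hScard,
      hE e he]
    omega
  · simpa only [insert_union] using isPMOn_pair hxE he hxdisj
  · simpa only [insert_union] using isPMOn_pair hyE he hydisj

/-- Subtraction-free form of `#L · (#E - (k + 1) n^(k-1)) ≤ 2^(2k-1) · #reachingSets`. -/
theorem card_inter_link_mul_card_le (hE : ∀ e ∈ E, e.card = k) (x y : V) :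
    #(link E k x ∩ link E k y) * #E ≤ 2 ^ (2 * k - 1) * #(reachingSets E k x y) +
      #(link E k x ∩ link E k y) * ((k + 1) * Fintype.card V ^ (k - 1)) := by
  set L := link E k x ∩ link E k y
  set D := fun S : Finset V => E.filter fun e => Disjoint e (insert x (insert y S))
  have hD : ∀ S ∈ L, #E ≤ #(D S) + (k + 1) * Fintype.card V ^ (k - 1) := by
    intro S hS
    obtain ⟨-, hxS, hxE⟩ := mem_link.1 (mem_inter.1 hS).1
    have hA : (insert x (insert y S)).card ≤ k + 1 := by
      rw [insert_comm, ← hE _ hxE]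
      exact card_insert_le _ _
    rw [← card_filter_add_card_filter_not (fun e => Disjoint e (insert x (insert y S)))]
    gcongr
    exact (card_filter_not_disjoint_le hE _).trans (Nat.mul_le_mul_right _ hA)
  have hpairs : #(L.sigma D) ≤ 2 ^ (2 * k - 1) * #(reachingSets E k x y) := by
    refine card_le_two_pow_mul_card_of_disjoint_union (fun p hp => ?_) (fun p hp => ?_)
      fun X hX => (mem_filter.1 hX).2.1
    · obtain ⟨-, hp⟩ := mem_sigma.1 hp
      exact ((mem_filter.1 hp).2.mono_right
        ((subset_insert y _).trans (subset_insert x _))).symm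
    · obtain ⟨hS, hp⟩ := mem_sigma.1 hp
      exact union_mem_reachingSets hE hS (mem_filter.1 hp).1 (mem_filter.1 hp).2
  calc #L * #E ≤ ∑ S ∈ L, (#(D S) + (k + 1) * Fintype.card V ^ (k - 1)) := by
        simpa only [smul_eq_mul] using card_nsmul_le_sum L _ _ hD
    _ = #(L.sigma D) + #L * ((k + 1) * Fintype.card V ^ (k - 1)) := by
        rw [sum_add_distrib, card_sigma, sum_const, smul_eq_mul]
    _ ≤ _ := by gcongr

end Counting

theorem add_one_mul_pow_pred_le {k : ℕ} (hk : 1 ≤ k) {γ N : ℝ} (hγ : 0 < γ)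
    (hN : 2 * k * (k + 1) / γ ≤ N) : (k + 1) * N ^ (k - 1) ≤ γ * N ^ k / (2 * k) := by
  have hk0 : (0 : ℝ) < 2 * k := by positivity
  have hN0 : 0 ≤ N := le_trans (by positivity) hN
  have hpow : N ^ k = N ^ (k - 1) * N := by rw [← pow_succ, Nat.sub_add_cancel hk]
  rw [le_div_iff₀ hk0, hpow]
  have key : 2 * k * (k + 1) ≤ N * γ := (div_le_iff₀ hγ).1 hN
  nlinarith [mul_le_mul_of_nonneg_left key (pow_nonneg hN0 (k - 1))]

theorem card_reachingSets_ge {V : Type*} [Fintype V] [DecidableEq V]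
    {E : Finset (Finset V)} {k : ℕ} (hk : 1 ≤ k) {γ : ℝ} (hγ : 0 < γ)
    (hn : 2 * k * (k + 1) / γ ≤ Fintype.card V)
    (hE : ∀ e ∈ E, e.card = k) (hEcard : γ * (Fintype.card V : ℝ) ^ k / k ≤ #E) {x y : V}
    (hL : γ * (Fintype.card V : ℝ) ^ (k - 1) ≤ #(link E k x ∩ link E k y)) :
    γ ^ 2 / (2 * k * 2 ^ (2 * k - 1)) * (Fintype.card V : ℝ) ^ (2 * k - 1) ≤
      #(reachingSets E k x y) := by
  have hcount : (#(link E k x ∩ link E k y) : ℝ) * #E ≤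
      2 ^ (2 * k - 1) * #(reachingSets E k x y) +
        #(link E k x ∩ link E k y) * ((k + 1) * (Fintype.card V : ℝ) ^ (k - 1)) := by
    exact_mod_cast card_inter_link_mul_card_le hE x y
  set N : ℝ := (Fintype.card V : ℝ)
  have hsurplus := add_one_mul_pow_pred_le hk hγ hn
  have hhalf : γ * N ^ k / (2 * k) ≤ #E - (k + 1) * N ^ (k - 1) := by
    have : γ * N ^ k / (2 * k) = γ * N ^ k / k - γ * N ^ k / (2 * k) := by field_simp; ring
    linarith
  have hpairs :
      γ * N ^ (k - 1) * (γ * N ^ k / (2 * k)) ≤ 2 ^ (2 * k - 1) * #(reachingSets E k x y) :=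
    calc γ * N ^ (k - 1) * (γ * N ^ k / (2 * k))
        ≤ #(link E k x ∩ link E k y) * (#E - (k + 1) * N ^ (k - 1)) :=
          mul_le_mul hL hhalf (by positivity) (by positivity)
      _ ≤ _ := by linarith
  have hpow : N ^ (k - 1) * N ^ k = N ^ (2 * k - 1) := by rw [← pow_add]; congr 1; omega
  calc γ ^ 2 / (2 * k * 2 ^ (2 * k - 1)) * N ^ (2 * k - 1)
      = γ * N ^ (k - 1) * (γ * N ^ k / (2 * k)) / 2 ^ (2 * k - 1) := by
        rw [← hpow]; field_simp
    _ ≤ _ := by rw [div_le_iff₀ (by positivity)]; linarith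

theorem stmt_9 (k : ℕ) (hk : 1 ≤ k) :
    ∃ γ₀ > (0 : ℝ), ∀ γ : ℝ, 0 < γ → γ ≤ γ₀ →
    ∃ γ'₀ > (0 : ℝ), ∀ γ' : ℝ, 0 < γ' → γ' ≤ γ'₀ →
    ∃ n₀ : ℕ, ∀ (V : Type) (_ : Fintype V) (_ : DecidableEq V),
      n₀ ≤ Fintype.card V →
      ∀ E : Finset (Finset V), (∀ e ∈ E, e.card = k) →
      γ * (Fintype.card V : ℝ) ^ k / k ≤ (E.card : ℝ) →
      ∀ x y : V,
      γ * (Fintype.card V : ℝ) ^ (k - 1) ≤ ((link E k x ∩ link E k y).card : ℝ) →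
      γ' * (Fintype.card V : ℝ) ^ (2 * k - 1) ≤
        (((Finset.univ : Finset (Finset V)).filter
          (fun X => X.card = 2 * k - 1 ∧
            (∃ M, IsPMOn E (insert x X) M) ∧ (∃ M, IsPMOn E (insert y X) M))).card : ℝ) := by
  refine ⟨1, one_pos, fun γ hγ _ => ⟨γ ^ 2 / (2 * k * 2 ^ (2 * k - 1)), by positivity,
    fun γ' _ hγ' => ⟨⌈2 * k * (k + 1) / γ⌉₊, fun V _ _ hn E hE hEcard x y hL => ?_⟩⟩⟩
  have hn' : 2 * k * (k + 1) / γ ≤ Fintype.card V := (Nat.le_ceil _).trans (by exact_mod_cast hn)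
  exact (mul_le_mul_of_nonneg_right hγ' (by positivity)).trans
    (card_reachingSets_ge hk hγ hn' hE hEcard hL)
end
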